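/- Let H₀ be a bounded self-adjoint operator on a complex Hilbert space 𝓗, F : 𝓗 →L[ℂ] 𝓚 a compact operator into a complex Hilbert space 𝓚, and λ ∈ ℝ. Then λ is semi-regular for H₀ with respect to F (i.e., there exist a bounded self-adjoint J on 𝓚 and r ∈ ℝ such that T_{λ+i0}(H₀ + r F* J F) exists in norm) if and only if the direction F*F is λ-regular for H₀ (i.e., there exists r ∈ ℝ such that T_{λ+i0}(H₀ + r F* F) exists in norm). -/

import Mathlib

open ContinuousLinearMap Filter Complex Set Topology

variable {𝓗 𝓚 : Type*} [NormedAddCommGroup 𝓗] [InnerProductSpace ℂ 𝓗] [CompleteSpace 𝓗]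
  [NormedAddCommGroup 𝓚] [InnerProductSpace ℂ 𝓚] [CompleteSpace 𝓚]

/-- `Tz F A z = F (A - z)⁻¹ F*`, using `Ring.inverse` (which is the genuine inverse when
`A - z•1` is invertible, as is the case for self-adjoint `A` and nonreal `z`). -/
noncomputable def Tz (F : 𝓗 →L[ℂ] 𝓚) (A : 𝓗 →L[ℂ] 𝓗) (z : ℂ) : 𝓚 →L[ℂ] 𝓚 :=
  F ∘L (Ring.inverse (A - z • (1 : 𝓗 →L[ℂ] 𝓗))) ∘L (adjoint F)

/-- The norm limit `T_{λ+i0}(A)` exists: there is a bounded operator `T` on `𝓚` such that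
`T_{λ+iy}(A) → T` in operator norm as `y → 0⁺`. -/
def NormLimitExists (F : 𝓗 →L[ℂ] 𝓚) (A : 𝓗 →L[ℂ] 𝓗) (lam : ℝ) : Prop :=
  ∃ T : 𝓚 →L[ℂ] 𝓚,
    Tendsto (fun y : ℝ => Tz F A ((lam : ℂ) + y * Complex.I)) (𝓝[>] 0) (𝓝 T)

/-- The direction `F* J F` is `λ`-regular for `H₀`: for some `r ∈ ℝ` the norm limit
`T_{λ+i0}(H₀ + r F* J F)` exists. -/
def IsRegularDirection (F : 𝓗 →L[ℂ] 𝓚) (H₀ : 𝓗 →L[ℂ] 𝓗) (lam : ℝ) (J : 𝓚 →L[ℂ] 𝓚) : Prop :=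
  ∃ r : ℝ, NormLimitExists F (H₀ + (r : ℂ) • ((adjoint F) ∘L J ∘L F)) lam

/-!
Let `T` be the norm limit of `T_{λ+iy}(H_r)`, `H_r = H₀ + r F*JF`. It is compact, and
`Im ⟪u, T u⟫ ≥ 0` because `Im ⟪u, T_z(H_r) u⟫ = Im z ‖(H_r - z)⁻¹ F* u‖²`. Since
`H₀ + s F*F = H_r + F*(s - rJ)F`, the second resolvent identity gives
`T_z(H₀ + s F*F) = (1 + T_z(H_r)(s - rJ))⁻¹ T_z(H_r)`, so the limit for `H₀ + s F*F` exists as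
soon as `1 + T(s - rJ)` is invertible.

For `Im c < 0` the operator `1 + T(c - rJ)` is injective, by the sign of the imaginary part, hence
invertible by the Fredholm alternative. With `E₀` its value at `c = -i`,
`1 + T(c - rJ) = E₀ (1 + (c + i) E₀⁻¹ T)`, which is invertible unless `-(c + i)⁻¹` is an
eigenvalue of the compact operator `E₀⁻¹ T`. A compact operator has only finitely many eigenvalues
of modulus `≥ 1/2`, so some `s ∈ [0, 1]` works. Conversely, `F*F` is the direction `J = 1`.
-/

open Module End
open scoped InnerProductSpace

namespace IsCompactOperator

theorem exists_norm_sub_lt {𝕜 X Y : Type*} [NontriviallyNormedField 𝕜]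
    [NormedAddCommGroup X] [NormedSpace 𝕜 X] [NormedAddCommGroup Y] [NormedSpace 𝕜 Y]
    {S : X →L[𝕜] Y} (hS : IsCompactOperator S) {x : ℕ → X} (hx : ∀ n, ‖x n‖ ≤ 1)
    {δ : ℝ} (hδ : 0 < δ) : ∃ m n, m < n ∧ ‖S (x n) - S (x m)‖ < δ := by
  have hmem (n : ℕ) : S (x n) ∈ closure (S '' Metric.closedBall 0 1) :=
    subset_closure ⟨x n, by simpa using hx n, rfl⟩
  obtain ⟨_, -, φ, hφ, hlim⟩ := (hS.isCompact_closure_image_closedBall 1).tendsto_subseq hmem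
  obtain ⟨N, hN⟩ := Metric.cauchySeq_iff'.mp hlim.cauchySeq δ hδ
  exact ⟨φ N, φ (N + 1), hφ N.lt_succ_self, by simpa [dist_eq_norm] using hN (N + 1) N.le_succ⟩

theorem isUnit_one_add_smul_iff {𝕜 X : Type*} [NontriviallyNormedField 𝕜] [NormedAddCommGroup X]
    [NormedSpace 𝕜 X] [CompleteSpace X] {S : X →L[𝕜] X} (hS : IsCompactOperator S) {c : 𝕜}
    (hc : c ≠ 0) : IsUnit (1 + c • S) ↔ ¬ HasEigenvalue (S : End 𝕜 X) (-c⁻¹) := by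
  have hc' : -c⁻¹ ≠ 0 := by simpa using hc
  rw [hS.hasEigenvalue_iff_mem_spectrum hc', spectrum.mem_iff, not_not,
    Algebra.algebraMap_eq_smul_one]
  have : -c⁻¹ • (1 : X →L[𝕜] X) - S = (-c⁻¹) • (1 + c • S) := by
    rw [smul_add, smul_smul, neg_mul, inv_mul_cancel₀ hc, neg_one_smul, sub_eq_add_neg]
  rw [this, ← Units.val_mk0 hc', ← Units.smul_def, isUnit_smul_iff]

end IsCompactOperator

section Eigenvalues

open InnerProductSpace Submodule

variable {𝕜 E : Type*} [RCLike 𝕜] [NormedAddCommGroup E] [InnerProductSpace 𝕜 E]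

theorem apply_sub_smul_mem_span_image_Iio (S : E →ₗ[𝕜] E) {μ : ℕ → 𝕜} {u : ℕ → E}
    (heig : ∀ n, S (u n) = μ n • u n) {n : ℕ} {v : E} (hv : v ∈ span 𝕜 (u '' Iic n)) :
    S v - μ n • v ∈ span 𝕜 (u '' Iio n) := by
  induction hv using Submodule.span_induction with
  | mem x hx =>
    obtain ⟨k, hk, rfl⟩ := hx
    rw [heig, ← sub_smul]
    rcases (mem_Iic.mp hk).lt_or_eq with hk | rfl
    · exact smul_mem _ _ (subset_span ⟨k, hk, rfl⟩)
    · simp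
  | zero => simp
  | add x y _ _ hx hy =>
    rw [map_add, smul_add, add_sub_add_comm]
    exact add_mem hx hy
  | smul c x _ hx =>
    rw [map_smul, smul_comm, ← smul_sub]
    exact smul_mem _ _ hx

theorem exists_norm_eigenvalue_le_norm_sub (S : E →ₗ[𝕜] E) {μ : ℕ → 𝕜} {u : ℕ → E}
    (hu : LinearIndependent 𝕜 u) (heig : ∀ n, S (u n) = μ n • u n) :
    ∃ e : ℕ → E, (∀ n, ‖e n‖ = 1) ∧ ∀ m n, m < n → ‖μ n‖ ≤ ‖S (e n) - S (e m)‖ := by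
  set e := gramSchmidtNormed 𝕜 u
  have he_norm (n : ℕ) : ‖e n‖ = 1 := gramSchmidtNormed_unit_length n hu
  have he_mem_Iic (n : ℕ) : e n ∈ span 𝕜 (u '' Iic n) :=
    smul_mem _ _ (gramSchmidt_mem_span 𝕜 u le_rfl)
  have hspan (n : ℕ) : span 𝕜 (u '' Iio n) = span 𝕜 (e '' Iio n) := by
    rw [span_gramSchmidtNormed, span_gramSchmidt_Iio]
  have he_orth (n : ℕ) : ∀ w ∈ span 𝕜 (u '' Iio n), ⟪e n, w⟫_𝕜 = 0 := by
    intro w hw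
    rw [hspan] at hw
    refine (mem_orthogonal_singleton_iff_inner_right (𝕜 := 𝕜)).mp (span_le.mpr ?_ hw)
    rintro _ ⟨i, hi, rfl⟩
    exact (mem_orthogonal_singleton_iff_inner_right (𝕜 := 𝕜)).mpr
      ((gramSchmidtNormed_orthonormal hu).2 (ne_of_gt hi))
  refine ⟨e, he_norm, fun m n hmn => ?_⟩
  have hSe_mem : S (e m) ∈ span 𝕜 (u '' Iio n) := by
    have hem : e m ∈ span 𝕜 (u '' Iio n) := by rw [hspan]; exact subset_span ⟨m, hmn, rfl⟩
    simpa using add_mem (span_mono (image_mono (Iio_subset_Iio hmn.le))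
      (apply_sub_smul_mem_span_image_Iio S heig (he_mem_Iic m))) (smul_mem _ (μ m) hem)
  have hinner : ⟪e n, S (e n) - S (e m)⟫_𝕜 = μ n := by
    have hrest : S (e n) - μ n • e n - S (e m) ∈ span 𝕜 (u '' Iio n) :=
      sub_mem (apply_sub_smul_mem_span_image_Iio S heig (he_mem_Iic n)) hSe_mem
    rw [show S (e n) - S (e m) = μ n • e n + (S (e n) - μ n • e n - S (e m)) by abel,
      inner_add_right, he_orth n _ hrest, inner_smul_right, inner_self_eq_norm_sq_to_K, he_norm]
    simp
  calc ‖μ n‖ = ‖⟪e n, S (e n) - S (e m)⟫_𝕜‖ := by rw [hinner]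
    _ ≤ ‖e n‖ * ‖S (e n) - S (e m)‖ := norm_inner_le_norm _ _
    _ = ‖S (e n) - S (e m)‖ := by rw [he_norm, one_mul]

theorem IsCompactOperator.finite_setOf_hasEigenvalue_le_norm {S : E →L[𝕜] E}
    (hS : IsCompactOperator S) {δ : ℝ} (hδ : 0 < δ) :
    {μ | HasEigenvalue (S : End 𝕜 E) μ ∧ δ ≤ ‖μ‖}.Finite := by
  refine Set.not_infinite.mp fun hinf => ?_
  set μ := hinf.natEmbedding
  choose u hu using fun n => (μ n).2.1.exists_hasEigenvector
  have hli : LinearIndependent 𝕜 u := eigenvectors_linearIndependent' _ (fun n => (μ n : 𝕜))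
    (Subtype.val_injective.comp μ.injective) u hu
  obtain ⟨e, he, hsep⟩ := exists_norm_eigenvalue_le_norm_sub (S : E →ₗ[𝕜] E) hli
    (fun n => (hu n).apply_eq_smul)
  obtain ⟨m, n, hmn, hlt⟩ := hS.exists_norm_sub_lt (fun n => (he n).le) hδ
  exact (hlt.trans_le ((μ n).2.2.trans (hsep m n hmn))).false

end Eigenvalues

theorem IsSelfAdjoint.isUnit_sub_smul_one {A : Type*} [CStarAlgebra A] {a : A}
    (ha : IsSelfAdjoint a) {z : ℂ} (hz : z.im ≠ 0) : IsUnit (a - z • 1) := by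
  have : z ∉ spectrum ℂ a := fun h => hz (ha.im_eq_zero_of_mem_spectrum h)
  rw [spectrum.notMem_iff, Algebra.algebraMap_eq_smul_one] at this
  simpa using this.neg

section ImaginaryPart

variable {E : Type*} [NormedAddCommGroup E] [InnerProductSpace ℂ E] [CompleteSpace E]

theorem IsSelfAdjoint.im_inner_sub_smul_one_apply_self {A : E →L[ℂ] E} (hA : IsSelfAdjoint A)
    (c : ℂ) (x : E) : (⟪(A - c • 1) x, x⟫_ℂ).im = c.im * ‖x‖ ^ 2 := by
  have hAx : (⟪A x, x⟫_ℂ).im = 0 := hA.isSymmetric.im_inner_apply_self x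
  have hxx : ⟪x, x⟫_ℂ = ((‖x‖ ^ 2 : ℝ) : ℂ) := by rw [inner_self_eq_norm_sq_to_K]; norm_cast
  simp only [sub_apply, smul_apply, one_apply_eq_self,
    inner_sub_left, inner_smul_left, hxx, sub_im, hAx, mul_im, conj_re, conj_im, ofReal_re,
    ofReal_im]
  ring

theorem IsSelfAdjoint.im_inner_inverse_sub_smul_one_nonneg {A : E →L[ℂ] E}
    (hA : IsSelfAdjoint A) {z : ℂ} (hz : 0 < z.im) (x : E) :
    0 ≤ (⟪x, Ring.inverse (A - z • 1) x⟫_ℂ).im := by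
  have h := hA.im_inner_sub_smul_one_apply_self z (Ring.inverse (A - z • 1) x)
  rw [← mul_apply_eq_comp, Ring.mul_inverse_cancel _ (hA.isUnit_sub_smul_one hz.ne'),
    one_apply_eq_self] at h
  rw [h]
  positivity

theorem isUnit_one_add_mul_smul_one_sub {T B : E →L[ℂ] E} (hT : IsCompactOperator T)
    (hTim : ∀ u, 0 ≤ (⟪u, T u⟫_ℂ).im) (hB : IsSelfAdjoint B) {c : ℂ} (hc : c.im < 0) :
    IsUnit (1 + T * (c • 1 - B)) := by
  have hTK : IsCompactOperator ⇑(T * (c • 1 - B)) := hT.comp_clm _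
  rw [← one_smul ℂ (T * _), hTK.isUnit_one_add_smul_iff one_ne_zero, inv_one]
  intro h
  obtain ⟨u, hu⟩ := h.exists_hasEigenvector
  set v := (c • 1 - B) u
  have hu_eq : u = -T v := by
    have hTv : T v = (-1 : ℂ) • u := hu.apply_eq_smul
    rw [hTv, neg_one_smul, neg_neg]
  have him : (⟪v, u⟫_ℂ).im = -c.im * ‖u‖ ^ 2 := by
    rw [show v = -((B - c • 1) u) by simp [v], inner_neg_left, neg_im,
      hB.im_inner_sub_smul_one_apply_self, neg_mul]
  have hle : (⟪v, u⟫_ℂ).im ≤ 0 := by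
    rw [hu_eq, inner_neg_right, neg_im]
    linarith [hTim v]
  have : ‖u‖ ^ 2 ≤ 0 := by nlinarith
  exact hu.2 (by simpa using this)

theorem exists_isUnit_one_add_mul_smul_one_sub {T B : E →L[ℂ] E} (hT : IsCompactOperator T)
    (hTim : ∀ u, 0 ≤ (⟪u, T u⟫_ℂ).im) (hB : IsSelfAdjoint B) :
    ∃ s : ℝ, IsUnit (1 + T * ((s : ℂ) • 1 - B)) := by
  have hE₀ := isUnit_one_add_mul_smul_one_sub hT hTim hB (c := -I) (by simp)
  set E₀ := 1 + T * (-I • 1 - B)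
  set S := Ring.inverse E₀ * T
  have hS : IsCompactOperator S := hT.clm_comp _
  have hfactor (c : ℂ) : 1 + T * (c • 1 - B) = E₀ * (1 + (c + I) • S) := by
    rw [mul_add, mul_one, mul_smul_comm, ← mul_assoc, Ring.mul_inverse_cancel _ hE₀, one_mul]
    simp only [E₀, mul_sub, mul_smul_comm, mul_one, add_smul, neg_smul, mul_neg]
    abel
  by_contra! h
  have hmaps : Set.MapsTo (fun s : ℝ => -((s : ℂ) + I)⁻¹) (Set.Icc 0 1)
      {μ | HasEigenvalue (S : End ℂ E) μ ∧ 1 / 2 ≤ ‖μ‖} := by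
    intro s hs
    have hne : (s : ℂ) + I ≠ 0 := fun h0 => by simpa using congrArg im h0
    refine ⟨not_not.mp fun hno => h s ?_, ?_⟩
    · rw [hfactor]
      exact hE₀.mul ((hS.isUnit_one_add_smul_iff hne).mpr hno)
    · have hle : ‖(s : ℂ) + I‖ ≤ 2 := (norm_add_le _ _).trans (by
        simp [abs_of_nonneg hs.1]; linarith [hs.2])
      rw [norm_neg, norm_inv, one_div]
      exact inv_anti₀ (norm_pos_iff.mpr hne) hle
  have hinj : Set.InjOn (fun s : ℝ => -((s : ℂ) + I)⁻¹) (Set.Icc 0 1) :=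
    fun a _ b _ hab => by simpa using hab
  exact Set.infinite_of_injOn_mapsTo hinj hmaps (Set.Icc_infinite zero_lt_one)
    (hS.finite_setOf_hasEigenvalue_le_norm (by norm_num))

end ImaginaryPart

section Resolvent

variable (F : 𝓗 →L[ℂ] 𝓚)

theorem isCompactOperator_Tz (hF : IsCompactOperator F) (A : 𝓗 →L[ℂ] 𝓗) (z : ℂ) :
    IsCompactOperator (Tz F A z) :=
  hF.comp_clm _

theorem im_inner_Tz_apply_self_nonneg {A : 𝓗 →L[ℂ] 𝓗} (hA : IsSelfAdjoint A) {z : ℂ}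
    (hz : 0 < z.im) (u : 𝓚) : 0 ≤ (⟪u, Tz F A z u⟫_ℂ).im := by
  rw [Tz, comp_apply, comp_apply, ← adjoint_inner_left]
  exact hA.im_inner_inverse_sub_smul_one_nonneg hz _

theorem im_inner_apply_self_nonneg_of_tendsto {A : 𝓗 →L[ℂ] 𝓗} (hA : IsSelfAdjoint A) {lam : ℝ}
    {T : 𝓚 →L[ℂ] 𝓚} (hT : Tendsto (fun y : ℝ => Tz F A (lam + y * I)) (𝓝[>] 0) (𝓝 T))
    (u : 𝓚) : 0 ≤ (⟪u, T u⟫_ℂ).im := by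
  have hcont : Continuous fun B : 𝓚 →L[ℂ] 𝓚 => (⟪u, B u⟫_ℂ).im := by fun_prop
  refine ge_of_tendsto ((hcont.tendsto T).comp hT) ?_
  filter_upwards [self_mem_nhdsWithin] with y hy
  exact im_inner_Tz_apply_self_nonneg F hA (by simpa using hy) u

theorem one_add_Tz_mul_mul_Tz_add {A : 𝓗 →L[ℂ] 𝓗} (K : 𝓚 →L[ℂ] 𝓚) {z : ℂ}
    (hA : IsUnit (A - z • 1)) (hAK : IsUnit (A + adjoint F ∘L K ∘L F - z • 1)) :
    (1 + Tz F A z * K) * Tz F (A + adjoint F ∘L K ∘L F) z = Tz F A z := by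
  set V := adjoint F ∘L K ∘L F
  set R := Ring.inverse (A - z • 1)
  set R' := Ring.inverse (A + V - z • 1)
  have hR : R = R' + R * V * R' := calc
    R = R * (A + V - z • 1) * R' := by rw [mul_assoc, Ring.mul_inverse_cancel _ hAK, mul_one]
    _ = R * (A - z • 1) * R' + R * V * R' := by
      rw [show A + V - z • 1 = (A - z • 1) + V by abel, mul_add, add_mul]
    _ = R' + R * V * R' := by rw [Ring.inverse_mul_cancel _ hA, one_mul]
  calc (1 + Tz F A z * K) * Tz F (A + V) z = F ∘L (R' + R * V * R') ∘L adjoint F := by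
        ext x; simp [Tz, R, R', V]
    _ = Tz F A z := by rw [← hR]; rfl

theorem normLimitExists_add_of_isUnit {A : 𝓗 →L[ℂ] 𝓗} (hA : IsSelfAdjoint A)
    {K : 𝓚 →L[ℂ] 𝓚} (hK : IsSelfAdjoint K) {lam : ℝ} {T : 𝓚 →L[ℂ] 𝓚}
    (hT : Tendsto (fun y : ℝ => Tz F A (lam + y * I)) (𝓝[>] 0) (𝓝 T))
    (hTK : IsUnit (1 + T * K)) : NormLimitExists F (A + adjoint F ∘L K ∘L F) lam := by
  have hlim : Tendsto (fun y : ℝ => 1 + Tz F A (lam + y * I) * K) (𝓝[>] 0) (𝓝 (1 + T * K)) :=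
    tendsto_const_nhds.add (hT.mul_const K)
  have hinv : ContinuousAt Ring.inverse (1 + T * K) := by
    simpa using NormedRing.inverse_continuousAt hTK.unit
  refine ⟨Ring.inverse (1 + T * K) * T, ((hinv.tendsto.comp hlim).mul hT).congr' ?_⟩
  filter_upwards [hlim.eventually (Units.isOpen.mem_nhds hTK), self_mem_nhdsWithin]
    with y hunit hy
  have hz : ((lam : ℂ) + y * I).im ≠ 0 := by simpa using hy.ne'
  have key := one_add_Tz_mul_mul_Tz_add F K (hA.isUnit_sub_smul_one hz)
    ((hA.add (hK.adjoint_conj F)).isUnit_sub_smul_one hz)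
  calc _ = Ring.inverse (1 + Tz F A (lam + y * I) * K) *
        ((1 + Tz F A (lam + y * I) * K) * Tz F (A + adjoint F ∘L K ∘L F) (lam + y * I)) := by
        rw [key]; rfl
    _ = _ := by rw [← mul_assoc, Ring.inverse_mul_cancel _ hunit, one_mul]

end Resolvent

/-- `λ` is semi-regular for `H₀` with respect to `F` if and only if the direction `F*F`
is `λ`-regular for `H₀`. -/
theorem semiRegular_iff_FstarF_regular
    (H₀ : 𝓗 →L[ℂ] 𝓗) (hH₀ : IsSelfAdjoint H₀)
    (F : 𝓗 →L[ℂ] 𝓚) (hF : IsCompactOperator F) (lam : ℝ) :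
    (∃ J : 𝓚 →L[ℂ] 𝓚, IsSelfAdjoint J ∧ IsRegularDirection F H₀ lam J) ↔
      (∃ r : ℝ, NormLimitExists F (H₀ + (r : ℂ) • ((adjoint F) ∘L F)) lam) := by
  refine ⟨fun ⟨J, hJ, r, T, hT⟩ => ?_, fun ⟨r, hr⟩ => ⟨1, .one _, r, by rwa [one_def, id_comp]⟩⟩
  have hreal (t : ℝ) : IsSelfAdjoint (t : ℂ) := conj_ofReal t
  have hrJ : IsSelfAdjoint ((r : ℂ) • J) := (hreal r).smul hJ
  have hHr : IsSelfAdjoint (H₀ + (r : ℂ) • (adjoint F ∘L J ∘L F)) :=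
    hH₀.add ((hreal r).smul (hJ.adjoint_conj F))
  obtain ⟨s, hs⟩ := exists_isUnit_one_add_mul_smul_one_sub
    (isCompactOperator_of_tendsto hT (.of_forall fun _ => isCompactOperator_Tz F hF _ _))
    (im_inner_apply_self_nonneg_of_tendsto F hHr hT) hrJ
  have hsplit : H₀ + (s : ℂ) • (adjoint F ∘L F) =
      H₀ + (r : ℂ) • (adjoint F ∘L J ∘L F) + adjoint F ∘L ((s : ℂ) • 1 - (r : ℂ) • J) ∘L F := by
    ext x; simp
  exact ⟨s, hsplit ▸ normLimitExists_add_of_isUnit F hHr (((hreal s).smul (.one _)).sub hrJ) hT hs⟩
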